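/- arXiv:1711.04096 — 3 statements merged into one kernel-verified Lean document; each statement's English description precedes it below -/
import Mathlib

section
/- For β > 2 and γ ≥ 0, the integral ∫_{γ^{-2/β}}^∞ 1/(1 + y^{β/2}) dy converges, and γ^{2/β} · ∫_{γ^{-2/β}}^∞ 1/(1 + y^{β/2}) dy = (2γ/(β-2)) · ₂F₁(1, 1 − 2/β; 2 − 2/β; −γ), where ₂F₁ is the Gauss hypergeometric function. -/
open MeasureTheory Set Real

/-- The Gauss hypergeometric value ₂F₁(1, 1-2/β; 2-2/β; -γ), expressed via its Euler
integral representation ₂F₁(a,b;c;z) = (Γ(c)/(Γ(b)Γ(c-b))) ∫₀¹ t^{b-1}(1-t)^{c-b-1}(1-zt)^{-a} dt,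
which here (a = 1, b = 1-2/β, c = 2-2/β, z = -γ, so c-b = 1 and Γ(c)/Γ(b) = 1-2/β) reads
(1-2/β) ∫₀¹ t^{-2/β}/(1+γt) dt.  This representation is valid for all γ ≥ 0. -/
noncomputable def gauss2F1 (β γ : ℝ) : ℝ :=
  (1 - 2 / β) * ∫ t in (0:ℝ)..1, t ^ (-(2 / β)) / (1 + γ * t)

/-- The integrand is integrable on all of `(0, ∞)`. -/
lemma Z_integrable_aux (β : ℝ) (hβ : 2 < β) :
    IntegrableOn (fun y : ℝ => 1 / (1 + y ^ (β / 2))) (Set.Ioi (0:ℝ)) := by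
  have hmeas : Measurable (fun y : ℝ => 1 / (1 + y ^ (β / 2))) := by
    apply Measurable.div measurable_const
    exact measurable_const.add (measurable_id.pow_const _)
  have h1 : IntegrableOn (fun y : ℝ => 1 / (1 + y ^ (β / 2))) (Set.Ioc (0:ℝ) 1) := by
    apply Measure.integrableOn_of_bounded (M := 1) (by simp) hmeas.aestronglyMeasurable
    filter_upwards [ae_restrict_mem measurableSet_Ioc] with y hy
    have h0 : (0:ℝ) < y ^ (β / 2) := rpow_pos_of_pos hy.1 _
    rw [Real.norm_eq_abs, abs_of_nonneg (by positivity)]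
    rw [div_le_one (by linarith)]
    linarith
  have h2 : IntegrableOn (fun y : ℝ => 1 / (1 + y ^ (β / 2))) (Set.Ioi (1:ℝ)) := by
    have hint : IntegrableOn (fun y : ℝ => y ^ (-(β / 2))) (Set.Ioi (1:ℝ)) :=
      integrableOn_Ioi_rpow_of_lt (by linarith) one_pos
    apply hint.integrable.mono hmeas.aestronglyMeasurable
    filter_upwards [ae_restrict_mem measurableSet_Ioi] with y hy
    have hy0 : (0:ℝ) < y := lt_trans one_pos hy
    have h0 : (0:ℝ) < y ^ (β / 2) := rpow_pos_of_pos hy0 _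
    rw [Real.norm_eq_abs, Real.norm_eq_abs, abs_of_nonneg (by positivity),
      abs_of_nonneg (rpow_nonneg hy0.le _), Real.rpow_neg hy0.le,
      div_le_iff₀ (by linarith), inv_mul_eq_div, le_div_iff₀ h0]
    nlinarith
  have : Set.Ioi (0:ℝ) = Set.Ioc 0 1 ∪ Set.Ioi 1 := by
    rw [Set.Ioc_union_Ioi_eq_Ioi]; norm_num
  rw [this]
  exact h1.union h2

/-- The substitution identity in the case `γ > 0`. -/
lemma Z_value_aux (β γ : ℝ) (hβ : 2 < β) (hγ : 0 < γ) :
    γ ^ (2 / β) * ∫ y in Set.Ioi (γ ^ (-(2 / β))), 1 / (1 + y ^ (β / 2)) =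
      2 * γ / (β - 2) * gauss2F1 β γ := by
  have hβ0 : (0:ℝ) < β := by linarith
  set p : ℝ := -(2 / β) with hpdef
  have hp : p < 0 := neg_lt_zero.mpr (by positivity)
  have hpne : p ≠ 0 := hp.ne
  set c : ℝ := γ ^ p with hcdef
  have hc : 0 < c := rpow_pos_of_pos hγ _
  set f : ℝ → ℝ := fun t => c * t ^ p with hfdef
  have himg : f '' Set.Ioo 0 1 = Set.Ioi c := by
    ext y
    constructor
    · rintro ⟨t, ⟨ht0, ht1⟩, rfl⟩
      have : 1 < t ^ p := (Real.one_lt_rpow_iff_of_pos ht0).2 (Or.inr ⟨ht1, hp⟩)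
      simpa [hfdef] using (by nlinarith : c < c * t ^ p)
    · intro hy
      have hy0 : 0 < y := lt_trans hc hy
      refine ⟨(y / c) ^ p⁻¹, ⟨by positivity, ?_⟩, ?_⟩
      · have h1 : 1 < y / c := (one_lt_div hc).2 hy
        exact Real.rpow_lt_one_of_one_lt_of_neg h1 (inv_lt_zero.mpr hp)
      · have : ((y / c) ^ p⁻¹) ^ p = y / c := Real.rpow_inv_rpow (by positivity) hpne
        simp only [hfdef, this]
        field_simp
  have hinj : Set.InjOn f (Set.Ioo 0 1) := by
    have : StrictAntiOn f (Set.Ioo 0 1) := by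
      intro a ha b hb hab
      have := Real.rpow_lt_rpow_of_neg ha.1 hab hp
      simp only [hfdef]
      nlinarith
    exact this.injOn
  set f' : ℝ → ℝ := fun t => c * (p * t ^ (p - 1)) with hf'def
  have hderiv : ∀ t ∈ Set.Ioo (0:ℝ) 1, HasDerivWithinAt f (f' t) (Set.Ioo 0 1) t := by
    intro t ht
    exact ((Real.hasDerivAt_rpow_const (Or.inl ht.1.ne')).const_mul c).hasDerivWithinAt
  have key := integral_image_eq_integral_abs_deriv_smul (measurableSet_Ioo)
      hderiv hinj (fun y => 1 / (1 + y ^ (β / 2)))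
  rw [himg] at key
  have hcongr : ∀ t ∈ Set.Ioo (0:ℝ) 1,
      |f' t| • (1 / (1 + f t ^ (β / 2))) = (2 * γ / β * c) * (t ^ p / (1 + γ * t)) := by
    intro t ht
    have ht0 := ht.1
    have htp : (0:ℝ) < t ^ p := rpow_pos_of_pos ht0 _
    have h1 : (0:ℝ) < t ^ (p - 1) := rpow_pos_of_pos ht0 _
    have hnp : c * (p * t ^ (p - 1)) ≤ 0 :=
      mul_nonpos_of_nonneg_of_nonpos hc.le
        (mul_nonpos_of_nonpos_of_nonneg hp.le h1.le)
    have habs : |f' t| = c * (2 / β) * t ^ (p - 1) := by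
      rw [hf'def]; simp only
      rw [abs_of_nonpos hnp, hpdef]; ring
    have hgt : (0:ℝ) < γ * t := by positivity
    have hft : f t ^ (β / 2) = (γ * t)⁻¹ := by
      have h2 : f t = (γ * t) ^ p := by
        simp only [hfdef, hcdef]
        rw [← Real.mul_rpow hγ.le ht0.le]
      have hmul : p * (β / 2) = -1 := by
        rw [hpdef]; field_simp
      rw [h2, ← Real.rpow_mul hgt.le, hmul, Real.rpow_neg_one]
    rw [habs, hft, smul_eq_mul]
    have hts : t ^ (p - 1) = t ^ p / t := Real.rpow_sub_one ht0.ne' p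
    rw [hts]
    have h1g : (0:ℝ) < 1 + γ * t := by positivity
    field_simp
    ring
  rw [setIntegral_congr_fun measurableSet_Ioo hcongr, integral_const_mul] at key
  have hIoo : ∫ t in Set.Ioo (0:ℝ) 1, t ^ p / (1 + γ * t) =
      ∫ t in (0:ℝ)..1, t ^ (-(2 / β)) / (1 + γ * t) := by
    rw [intervalIntegral.integral_of_le zero_le_one, integral_Ioc_eq_integral_Ioo, hpdef]
  rw [key, hIoo, gauss2F1]
  have hcc : γ ^ (2 / β) * c = 1 := by
    rw [hcdef, hpdef, ← Real.rpow_add hγ]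
    simp
  set I := ∫ t in (0:ℝ)..1, t ^ (-(2 / β)) / (1 + γ * t)
  have hb2 : β - 2 ≠ 0 := by linarith
  calc γ ^ (2 / β) * (2 * γ / β * c * I) = (γ ^ (2/β) * c) * (2 * γ / β * I) := by ring
    _ = 2 * γ / β * I := by rw [hcc]; ring
    _ = 2 * γ / (β - 2) * ((1 - 2 / β) * I) := by field_simp

/-- For β > 2 and γ ≥ 0, the integral ∫_{γ^{-2/β}}^∞ dy/(1+y^{β/2}) converges and
γ^{2/β} times it equals (2γ/(β-2)) ₂F₁(1, 1-2/β; 2-2/β; -γ). -/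
theorem Z_hypergeometric_identity (β γ : ℝ) (hβ : 2 < β) (hγ : 0 ≤ γ) :
    IntegrableOn (fun y : ℝ => 1 / (1 + y ^ (β / 2))) (Set.Ioi (γ ^ (-(2 / β)))) ∧
    γ ^ (2 / β) * ∫ y in Set.Ioi (γ ^ (-(2 / β))), 1 / (1 + y ^ (β / 2)) =
      2 * γ / (β - 2) * gauss2F1 β γ := by
  have hβ0 : (0:ℝ) < β := by linarith
  constructor
  · exact (Z_integrable_aux β hβ).mono_set
      (Set.Ioi_subset_Ioi (rpow_nonneg hγ _))
  · rcases eq_or_lt_of_le hγ with h0 | hpos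
    · subst h0
      rw [Real.zero_rpow (by positivity : (2:ℝ)/β ≠ 0)]
      ring
    · exact Z_value_aux β γ hβ hpos
end

section
/- For λ_b > 0, β > 2, σ² ≥ 0, P > 0 and γ ≥ 0, the function F(γ) = 1 − 2πλ_b ∫_0^∞ x·exp(−πλ_b x²·(Z(γ) + 1) − (σ²/P)·γ·x^β) dx, where Z(γ) = (2γ/(β−2))·₂F₁(1,1−2/β;2−2/β;−γ), satisfies F(0) = 0, F is nondecreasing in γ, and F(γ) → 1 as γ → ∞. In the interference-limited case σ² = 0, F(γ) = 1 − 1/(Z(γ)+1) = Z(γ)/(Z(γ)+1). -/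
/-!
Conditioning on the distance `x` to the nearest base station, `1 - F γ` is `2πλ_b` times
`J(a, c) = ∫₀^∞ x exp(-a x² - c x^β) dx` with `a = πλ_b (Z(γ) + 1)` and `c = σ² γ / P`.
The integral `J` is antitone in `a` and `c`, and `J(a, 0) = 1 / (2a)` is a Gaussian integral.
This gives `F 0 = 0` and the interference-limited closed form directly, monotonicity of `F`
from monotonicity of `Z`, and the squeeze `0 ≤ 1 - F γ ≤ 1 / (Z(γ) + 1)`. Finally
`Z(γ) = (2/β) ∫₀¹ γ t^(-2/β) / (1 + γ t) dt ≥ (2/β) log (1 + γ)` since `t^(-2/β) ≥ 1`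
on `(0, 1]`, so `Z → ∞` and `F → 1`.
-/

open MeasureTheory Set Real Filter

/-- Z(γ) = (2γ/(β-2)) ₂F₁(1, 1-2/β; 2-2/β; -γ). -/
noncomputable def Zfun (β γ : ℝ) : ℝ := 2 * γ / (β - 2) * gauss2F1 β γ

section Zfun

variable {β γ : ℝ}

lemma intervalIntegrable_div_one_add_mul_mul_rpow {p : ℝ} (hp : p < 1) (hγ : 0 ≤ γ) :
    IntervalIntegrable (fun t : ℝ => γ / (1 + γ * t) * t ^ (-p)) volume 0 1 := by
  have hcont : ContinuousOn (fun t : ℝ => γ / (1 + γ * t)) (uIcc 0 1) := by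
    refine continuousOn_const.div (by fun_prop) fun t ht => ?_
    rw [uIcc_of_le zero_le_one] at ht
    have := ht.1
    positivity
  exact (intervalIntegral.intervalIntegrable_rpow' (by linarith)).continuousOn_mul hcont

lemma Zfun_eq_integral (hβ : 2 < β) (γ : ℝ) :
    Zfun β γ = 2 / β * ∫ t in (0:ℝ)..1, γ / (1 + γ * t) * t ^ (-(2 / β)) := by
  have hβ₂ : β - 2 ≠ 0 := by linarith
  have hβ₀ : β ≠ 0 := by linarith
  simp only [Zfun, gauss2F1, ← intervalIntegral.integral_const_mul]
  congr 1 with t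
  field_simp

lemma Zfun_zero : Zfun β 0 = 0 := by simp [Zfun]

lemma div_one_add_mul_le_div_one_add_mul {γ₁ γ₂ t : ℝ} (h₁ : 0 ≤ γ₁) (ht : 0 ≤ t)
    (h : γ₁ ≤ γ₂) : γ₁ / (1 + γ₁ * t) ≤ γ₂ / (1 + γ₂ * t) := by
  rw [div_le_div_iff₀ (by positivity) (by nlinarith)]
  nlinarith

lemma monotoneOn_Zfun (hβ : 2 < β) : MonotoneOn (Zfun β) (Ici 0) := by
  intro γ₁ (h₁ : 0 ≤ γ₁) γ₂ (h₂ : 0 ≤ γ₂) h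
  have hp : 2 / β < 1 := (div_lt_one (by linarith)).mpr hβ
  rw [Zfun_eq_integral hβ, Zfun_eq_integral hβ]
  gcongr ?_ * ?_
  refine intervalIntegral.integral_mono_on zero_le_one
    (intervalIntegrable_div_one_add_mul_mul_rpow hp h₁)
    (intervalIntegrable_div_one_add_mul_mul_rpow hp h₂) fun t ht => ?_
  exact mul_le_mul_of_nonneg_right (div_one_add_mul_le_div_one_add_mul h₁ ht.1 h)
    (rpow_nonneg ht.1 _)

lemma Zfun_nonneg (hβ : 2 < β) (hγ : 0 ≤ γ) : 0 ≤ Zfun β γ :=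
  Zfun_zero (β := β) ▸ monotoneOn_Zfun hβ (le_refl (0:ℝ)) hγ hγ

lemma integral_div_one_add_mul (hγ : 0 ≤ γ) :
    ∫ t in (0:ℝ)..1, γ / (1 + γ * t) = log (1 + γ) := by
  have hderiv : ∀ t ∈ uIcc (0:ℝ) 1,
      HasDerivAt (fun t => log (1 + γ * t)) (γ / (1 + γ * t)) t := by
    intro t ht
    rw [uIcc_of_le zero_le_one] at ht
    have := ht.1
    simpa using (((hasDerivAt_id t).const_mul γ).const_add 1).log (by positivity)
  have hint := intervalIntegrable_div_one_add_mul_mul_rpow zero_lt_one hγ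
  simp only [neg_zero, rpow_zero, mul_one] at hint
  simp [intervalIntegral.integral_eq_sub_of_hasDerivAt hderiv hint]

lemma log_one_add_le_Zfun (hβ : 2 < β) (hγ : 0 ≤ γ) : 2 / β * log (1 + γ) ≤ Zfun β γ := by
  have hp : 2 / β < 1 := (div_lt_one (by linarith)).mpr hβ
  rw [Zfun_eq_integral hβ, ← integral_div_one_add_mul hγ]
  gcongr ?_ * ?_
  refine intervalIntegral.integral_mono_on_of_le_Ioo zero_le_one
    (by simpa using intervalIntegrable_div_one_add_mul_mul_rpow zero_lt_one hγ)
    (intervalIntegrable_div_one_add_mul_mul_rpow hp hγ) fun t ⟨ht₀, ht₁⟩ => ?_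
  refine le_mul_of_one_le_right (by positivity) ?_
  exact one_le_rpow_of_pos_of_le_one_of_nonpos ht₀ ht₁.le (neg_nonpos.mpr (by positivity))

lemma tendsto_Zfun_atTop (hβ : 2 < β) : Tendsto (Zfun β) atTop atTop := by
  refine tendsto_atTop_mono' atTop ?_ (Tendsto.const_mul_atTop (by positivity : 0 < 2 / β)
    (tendsto_log_atTop.comp (tendsto_atTop_add_const_left _ 1 tendsto_id)))
  filter_upwards [eventually_ge_atTop 0] with γ hγ
  exact log_one_add_le_Zfun hβ hγ

end Zfun

noncomputable def radialIntegral (β a c : ℝ) : ℝ :=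
  ∫ x in Ioi (0:ℝ), x * exp (-(a * x ^ 2) - c * x ^ β)

section radialIntegral

variable {β a c : ℝ}

lemma integral_mul_exp_neg_mul_sq_Ioi (ha : 0 < a) :
    ∫ x in Ioi (0:ℝ), x * exp (-(a * x ^ 2)) = (2 * a)⁻¹ := by
  have h := integral_mul_cexp_neg_mul_sq (b := (a : ℂ)) (by simpa using ha)
  have hcast : ∀ x : ℝ,
      (x : ℂ) * Complex.exp (-a * x ^ 2) = ((x * exp (-(a * x ^ 2)) : ℝ) : ℂ) := by
    intro x
    push_cast
    ring_nf
  simp_rw [hcast, integral_complex_ofReal] at h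
  exact_mod_cast h

lemma radialIntegral_zero_right (ha : 0 < a) : radialIntegral β a 0 = (2 * a)⁻¹ := by
  simpa [radialIntegral] using integral_mul_exp_neg_mul_sq_Ioi ha

lemma integrableOn_mul_exp_neg_mul_sq_sub_mul_rpow (ha : 0 < a) (hc : 0 ≤ c) :
    IntegrableOn (fun x : ℝ => x * exp (-(a * x ^ 2) - c * x ^ β)) (Ioi 0) := by
  have hrpow : ContinuousOn (fun x : ℝ => x ^ β) (Ioi 0) :=
    continuousOn_id.rpow_const fun x (hx : 0 < x) => Or.inl hx.ne'
  have hmeas : ContinuousOn (fun x : ℝ => x * exp (-(a * x ^ 2) - c * x ^ β)) (Ioi 0) := by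
    fun_prop
  refine ((integrable_mul_exp_neg_mul_sq ha).integrableOn).mono'
    (hmeas.aestronglyMeasurable measurableSet_Ioi) ?_
  filter_upwards [ae_restrict_mem measurableSet_Ioi] with x (hx : 0 < x)
  rw [norm_of_nonneg (by positivity), neg_mul]
  gcongr
  have : 0 ≤ c * x ^ β := by positivity
  linarith

lemma radialIntegral_nonneg : 0 ≤ radialIntegral β a c :=
  setIntegral_nonneg measurableSet_Ioi fun x (hx : 0 < x) => by positivity

lemma radialIntegral_anti {a' c' : ℝ} (ha : 0 < a) (hc : 0 ≤ c) (haa' : a ≤ a')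
    (hcc' : c ≤ c') : radialIntegral β a' c' ≤ radialIntegral β a c :=
  setIntegral_mono_on
    (integrableOn_mul_exp_neg_mul_sq_sub_mul_rpow (ha.trans_le haa') (hc.trans hcc'))
    (integrableOn_mul_exp_neg_mul_sq_sub_mul_rpow ha hc) measurableSet_Ioi
    fun x (hx : 0 < x) => by gcongr

lemma two_mul_mul_radialIntegral_mul_zero {k z : ℝ} (hk : 0 < k) (hz : 0 < z) :
    2 * k * radialIntegral β (k * z) 0 = z⁻¹ := by
  rw [radialIntegral_zero_right (by positivity)]
  field_simp

lemma two_mul_mul_radialIntegral_mul_le {k z : ℝ} (hk : 0 < k) (hz : 0 < z) (hc : 0 ≤ c) :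
    2 * k * radialIntegral β (k * z) c ≤ z⁻¹ :=
  calc 2 * k * radialIntegral β (k * z) c ≤ 2 * k * radialIntegral β (k * z) 0 := by
        gcongr
        exact radialIntegral_anti (by positivity) le_rfl le_rfl hc
    _ = z⁻¹ := two_mul_mul_radialIntegral_mul_zero hk hz

end radialIntegral

/-- The SINR CDF of a typical user without cache (Lemma 3):
F(0)=0, F is nondecreasing, F(γ) → 1 as γ → ∞, and in the interference-limited case
σ² = 0 it has the closed form Z(γ)/(Z(γ)+1). -/
theorem normal_user_sinr_cdf (lb β σ2 P : ℝ) (hlb : 0 < lb) (hβ : 2 < β)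
    (hσ : 0 ≤ σ2) (hP : 0 < P)
    (F : ℝ → ℝ)
    (hF : ∀ γ, F γ = 1 - 2 * π * lb * ∫ x in Set.Ioi (0:ℝ),
        x * Real.exp (-(π * lb * x ^ 2 * (Zfun β γ + 1)) - σ2 / P * γ * x ^ β)) :
    F 0 = 0 ∧ MonotoneOn F (Set.Ici 0) ∧ Tendsto F atTop (nhds 1) ∧
    (σ2 = 0 → ∀ γ, 0 ≤ γ → F γ = Zfun β γ / (Zfun β γ + 1)) := by
  set J := fun γ => radialIntegral β (π * lb * (Zfun β γ + 1)) (σ2 / P * γ)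
  have hFJ (γ : ℝ) : F γ = 1 - 2 * (π * lb) * J γ := by
    rw [hF, mul_assoc 2 π lb]
    simp only [J, radialIntegral, mul_right_comm _ (_ ^ 2)]
  have hπlb : 0 < π * lb := by positivity
  have hZ1 {γ : ℝ} (hγ : 0 ≤ γ) : 0 < Zfun β γ + 1 := by linarith [Zfun_nonneg hβ hγ]
  have hc {γ : ℝ} (hγ : 0 ≤ γ) : 0 ≤ σ2 / P * γ := by positivity
  refine ⟨?_, ?_, ?_, ?_⟩
  · simp only [hFJ, J, mul_zero]
    rw [two_mul_mul_radialIntegral_mul_zero hπlb (hZ1 le_rfl), Zfun_zero]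
    norm_num
  · intro γ₁ (h₁ : 0 ≤ γ₁) γ₂ (h₂ : 0 ≤ γ₂) h
    rw [hFJ, hFJ]
    refine sub_le_sub_left (mul_le_mul_of_nonneg_left ?_ (by positivity)) 1
    exact radialIntegral_anti (mul_pos hπlb (hZ1 h₁)) (hc h₁)
      (by gcongr; exact monotoneOn_Zfun hβ h₁ h₂ h) (by gcongr)
  · have hJ_zero : Tendsto (fun γ => 2 * (π * lb) * J γ) atTop (nhds 0) :=
      tendsto_of_tendsto_of_tendsto_of_le_of_le' tendsto_const_nhds
        (tendsto_atTop_add_const_right _ 1 (tendsto_Zfun_atTop hβ)).inv_tendsto_atTop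
        (.of_forall fun γ => mul_nonneg (by positivity) radialIntegral_nonneg)
        (eventually_ge_atTop 0 |>.mono fun γ hγ =>
          two_mul_mul_radialIntegral_mul_le hπlb (hZ1 hγ) (hc hγ))
    rw [funext hFJ]
    simpa using hJ_zero.const_sub 1
  · rintro rfl γ hγ
    have := hZ1 hγ
    simp only [hFJ, J, zero_div, zero_mul]
    rw [two_mul_mul_radialIntegral_mul_zero hπlb this]
    field_simp
    ring
end

section
/- Let γ_u and γ_e be independent nonnegative random variables with CDFs F_u, F_e and suppose F_u is continuous. Then E[max(log₂(1+γ_u) − log₂(1+γ_e), 0)] = (1/ln 2)·∫_0^∞ (1 − F_u(t))·F_e(t)/(1+t) dt. -/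
/-! Writing `(log (1 + a) - log (1 + b))⁺ = ∫_{b ≤ t < a} dt / (1 + t)` for `0 ≤ b`, Tonelli turns the
expectation into `∫₀^∞ P(γe ≤ t < γu) dt / (1 + t)`, and independence factors the probability as
`(1 - F_u t) F_e t`. -/

open MeasureTheory ProbabilityTheory Real Set
open scoped ENNReal

lemma lintegral_Ico_inv_one_add {a b : ℝ} (hb : -1 < b) (hba : b ≤ a) :
    ∫⁻ t in Ico b a, ENNReal.ofReal (1 + t)⁻¹ = ENNReal.ofReal (log (1 + a) - log (1 + b)) := by
  have hpos : ∀ t ∈ Icc b a, 0 < 1 + t := fun t ht => by linarith [ht.1]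
  have hint : IntegrableOn (fun t : ℝ => (1 + t)⁻¹) (Ico b a) :=
    (ContinuousOn.inv₀ (by fun_prop) fun t ht => (hpos t ht).ne').integrableOn_Icc.mono_set
      Ico_subset_Icc_self
  rw [← ofReal_integral_eq_lintegral_ofReal hint ((ae_restrict_iff' measurableSet_Ico).2
    (ae_of_all _ fun t ht => (inv_pos.2 (hpos t (Ico_subset_Icc_self ht))).le)),
    integral_Ico_eq_integral_Ioc, ← intervalIntegral.integral_of_le hba,
    intervalIntegral.integral_comp_add_left (fun x => x⁻¹), integral_inv_of_pos (by linarith)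
    (by linarith), log_div (by linarith) (by linarith)]

lemma ofReal_max_log_one_add_sub_eq_lintegral {a b : ℝ} (ha : 0 ≤ a) (hb : 0 ≤ b) :
    ENNReal.ofReal (max (log (1 + a) - log (1 + b)) 0) =
      ∫⁻ t in Ioi (0 : ℝ), (Ico b a).indicator (fun t => ENNReal.ofReal (1 + t)⁻¹) t := by
  rcases le_total a b with hab | hba
  · have hlog : log (1 + a) ≤ log (1 + b) := log_le_log (by linarith) (by linarith)
    simp [Ico_eq_empty_of_le hab, hlog]
  · rw [max_eq_left (sub_nonneg.2 (log_le_log (by linarith) (by linarith))),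
      setLIntegral_congr Ioi_ae_eq_Ici, lintegral_indicator measurableSet_Ico,
      Measure.restrict_restrict measurableSet_Ico,
      inter_eq_left.2 (Ico_subset_Ici_self.trans (Ici_subset_Ici.2 hb)),
      lintegral_Ico_inv_one_add (by linarith) hba]

lemma max_logb_sub_logb_zero {c x y : ℝ} (hc : 1 < c) :
    max (logb c x - logb c y) 0 = (1 / log c) * max (log x - log y) 0 := by
  rw [logb, logb, div_sub_div_same, ← zero_div (log c), max_div_div_right (log_pos hc).le,
    zero_div, one_div_mul_eq_div]

lemma lintegral_lintegral_indicator_Ico {Ω : Type*} [MeasurableSpace Ω] (μ : Measure Ω)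
    [SFinite μ] (ν : Measure ℝ) [SFinite ν] {X Y : Ω → ℝ} (hX : Measurable X)
    (hY : Measurable Y) {f : ℝ → ℝ≥0∞} (hf : Measurable f) :
    ∫⁻ ω, ∫⁻ t, (Ico (Y ω) (X ω)).indicator f t ∂ν ∂μ =
      ∫⁻ t, f t * μ {ω | Y ω ≤ t ∧ t < X ω} ∂ν := by
  have hS : MeasurableSet {p : Ω × ℝ | Y p.1 ≤ p.2 ∧ p.2 < X p.1} :=
    (measurableSet_le (hY.comp measurable_fst) measurable_snd).inter
      (measurableSet_lt measurable_snd (hX.comp measurable_fst))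
  rw [lintegral_lintegral_swap (f := fun ω t => (Ico (Y ω) (X ω)).indicator f t)
    ((hf.comp measurable_snd).indicator hS).aemeasurable]
  refine lintegral_congr fun t => ?_
  have hE : MeasurableSet {ω | Y ω ≤ t ∧ t < X ω} :=
    (measurableSet_le hY measurable_const).inter (measurableSet_lt measurable_const hX)
  rw [← lintegral_indicator_const hE]
  rfl

lemma ProbabilityTheory.IndepFun.measure_le_and_lt {Ω : Type*} [MeasurableSpace Ω]
    {μ : Measure Ω} {X Y : Ω → ℝ} (hind : IndepFun X Y μ) (t : ℝ) :
    μ {ω | Y ω ≤ t ∧ t < X ω} = μ (X ⁻¹' Ioi t) * μ (Y ⁻¹' Iic t) := by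
  rw [← hind.measure_inter_preimage_eq_mul _ _ measurableSet_Ioi measurableSet_Iic, inter_comm]
  rfl

lemma measure_preimage_Ioi_eq_ofReal_one_sub {Ω : Type*} [MeasurableSpace Ω] {μ : Measure Ω}
    [IsProbabilityMeasure μ] {X : Ω → ℝ} (hX : Measurable X) (t : ℝ) :
    μ (X ⁻¹' Ioi t) = ENNReal.ofReal (1 - (μ {ω | X ω ≤ t}).toReal) := by
  have hs : MeasurableSet {ω | X ω ≤ t} := measurableSet_le hX measurable_const
  have hcompl : X ⁻¹' Ioi t = {ω | X ω ≤ t}ᶜ := by ext; simp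
  rw [hcompl, prob_compl_eq_one_sub hs, ENNReal.ofReal_sub _ ENNReal.toReal_nonneg,
    ENNReal.ofReal_one, ENNReal.ofReal_toReal (measure_ne_top μ _)]

theorem average_secrecy_rate_repr_general {Ω : Type*} [MeasurableSpace Ω] (μ : Measure Ω)
    [IsProbabilityMeasure μ] (γu γe : Ω → ℝ)
    (hγu : Measurable γu) (hγe : Measurable γe)
    (hγu0 : ∀ ω, 0 ≤ γu ω) (hγe0 : ∀ ω, 0 ≤ γe ω)
    (hind : IndepFun γu γe μ)
    (Fu Fe : ℝ → ℝ)
    (hFu : ∀ t, Fu t = (μ {ω | γu ω ≤ t}).toReal)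
    (hFe : ∀ t, Fe t = (μ {ω | γe ω ≤ t}).toReal) :
    (∫⁻ ω, ENNReal.ofReal
        (max (Real.logb 2 (1 + γu ω) - Real.logb 2 (1 + γe ω)) 0) ∂μ) =
      ENNReal.ofReal (1 / Real.log 2) *
        ∫⁻ t in Set.Ioi (0:ℝ), ENNReal.ofReal ((1 - Fu t) * Fe t / (1 + t)) := by
  have hinv : Measurable fun t : ℝ => ENNReal.ofReal (1 + t)⁻¹ := by fun_prop
  calc _ = ∫⁻ ω, ENNReal.ofReal (1 / log 2) * (∫⁻ t in Ioi (0 : ℝ),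
        (Ico (γe ω) (γu ω)).indicator (fun t => ENNReal.ofReal (1 + t)⁻¹) t) ∂μ := by
        refine lintegral_congr fun ω => ?_
        rw [max_logb_sub_logb_zero one_lt_two, ENNReal.ofReal_mul (by positivity),
          ofReal_max_log_one_add_sub_eq_lintegral (hγu0 ω) (hγe0 ω)]
    _ = ENNReal.ofReal (1 / log 2) *
        ∫⁻ t in Ioi (0 : ℝ), ENNReal.ofReal (1 + t)⁻¹ * μ {ω | γe ω ≤ t ∧ t < γu ω} := by
        rw [lintegral_const_mul' _ _ ENNReal.ofReal_ne_top,
          lintegral_lintegral_indicator_Ico μ _ hγu hγe hinv]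
    _ = _ := by
        congr 1
        refine setLIntegral_congr_fun measurableSet_Ioi fun t (ht : 0 < t) => ?_
        rw [hind.measure_le_and_lt, measure_preimage_Ioi_eq_ofReal_one_sub hγu, ← hFu, hFe,
          div_eq_inv_mul, ENNReal.ofReal_mul (inv_nonneg.2 (by linarith)),
          ENNReal.ofReal_mul' ENNReal.toReal_nonneg, ENNReal.ofReal_toReal (measure_ne_top μ _)]
        rfl

/-- The average secrecy rate representation (eq. (12)):
E[⌈log₂(1+γ_u) - log₂(1+γ_e)⌉⁺] = (1/ln 2) ∫₀^∞ (1-F_u(t)) F_e(t)/(1+t) dt,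
for independent nonnegative γ_u, γ_e with F_u continuous.  (Stated with lower
integrals so that both sides are meaningful without integrability assumptions.) -/
theorem average_secrecy_rate_repr {Ω : Type*} [MeasurableSpace Ω] (μ : Measure Ω)
    [IsProbabilityMeasure μ] (γu γe : Ω → ℝ)
    (hγu : Measurable γu) (hγe : Measurable γe)
    (hγu0 : ∀ ω, 0 ≤ γu ω) (hγe0 : ∀ ω, 0 ≤ γe ω)
    (hind : IndepFun γu γe μ)
    (Fu Fe : ℝ → ℝ)
    (hFu : ∀ t, Fu t = (μ {ω | γu ω ≤ t}).toReal)
    (hFe : ∀ t, Fe t = (μ {ω | γe ω ≤ t}).toReal)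
    (hFucont : Continuous Fu) :
    (∫⁻ ω, ENNReal.ofReal
        (max (Real.logb 2 (1 + γu ω) - Real.logb 2 (1 + γe ω)) 0) ∂μ) =
      ENNReal.ofReal (1 / Real.log 2) *
        ∫⁻ t in Set.Ioi (0:ℝ), ENNReal.ofReal ((1 - Fu t) * Fe t / (1 + t)) :=
  average_secrecy_rate_repr_general μ γu γe hγu hγe hγu0 hγe0 hind Fu Fe hFu hFe
end
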